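/- arXiv:2407.08941 — 2 statements merged into one kernel-verified Lean document; each statement's English description precedes it below -/
import Mathlib

section
/- For any vector (q_1, …, q_{m−1}) of non-negative integers with at least one q_i > 0, if 2 + Σ_{i=1}^{m−1} i·q_i = n, then there exists a tree with exactly n leaves whose internal nodes have degrees between 3 and m+1, such that for each i the number of internal nodes of degree i+2 is exactly q_i. -/
/-!
List the prescribed internal degrees as `d : Fin k → ℕ` (the value `i` occurring `q i` times) and
build a caterpillar: a path of `k` spine vertices, spine vertex `j` being padded with pendant
leaves up to degree `d j + 2`. It is a tree because it is the graph of a parent map that strictly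
decreases a rank away from the root. Its leaf count is forced by the handshake lemma for trees,
`∑ v, deg v = 2 (|V| - 1)`, which gives `#leaves = 2 + ∑ j, d j`.
-/

open Finset

theorem Finset.exists_fin_card_fiber_eq {α : Type*} [DecidableEq α] (s : Finset α) (q : α → ℕ) :
    ∃ (k : ℕ) (d : Fin k → α), (∀ j, d j ∈ s) ∧ ∀ i ∈ s, #{j | d j = i} = q i := by
  let e := Fintype.equivFin (Σ i : s, Fin (q i))
  refine ⟨_, fun j => (e.symm j).1, fun j => (e.symm j).1.2, fun i hi => ?_⟩
  rw [card_equiv e.symm (t := {x | (x.1 : α) = i}) (by simp), card_filter, Fintype.sum_sigma,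
    sum_coe_sort s fun i' => ∑ _ : Fin (q i'), if i' = i then 1 else 0]
  simp [hi]

namespace SimpleGraph

variable {V : Type*}

theorem IsTree.sum_degree_add_two {G : SimpleGraph V} [Fintype V] [DecidableRel G.Adj]
    (hG : G.IsTree) : ∑ v, G.degree v + 2 = 2 * Fintype.card V := by
  rw [sum_degrees_eq_twice_card_edges, ← hG.card_edgeFinset, mul_add_one]

def parentGraph (p : V → V) : SimpleGraph V := fromRel fun a b => p a = b

@[simp]
theorem parentGraph_adj {p : V → V} {a b : V} :
    (parentGraph p).Adj a b ↔ a ≠ b ∧ (p a = b ∨ p b = a) :=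
  fromRel_adj _ _ _

instance [DecidableEq V] (p : V → V) : DecidableRel (parentGraph p).Adj :=
  fun _ _ => decidable_of_iff' _ parentGraph_adj

variable {p : V → V} {root : V} {r : V → ℕ}

theorem parentGraph_reachable_root (hr : ∀ v ≠ root, r (p v) < r v) (v : V) :
    (parentGraph p).Reachable v root := by
  induction hv : r v using Nat.strong_induction_on generalizing v with
  | _ n ih =>
    by_cases h : v = root
    · rw [h]
    · have hlt := hr v h
      have hadj : (parentGraph p).Adj v (p v) :=
        parentGraph_adj.2 ⟨fun he => by rw [← he] at hlt; omega, Or.inl rfl⟩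
      exact hadj.reachable.trans (ih _ (hv ▸ hlt) _ rfl)

theorem parentGraph_connected (hr : ∀ v ≠ root, r (p v) < r v) : (parentGraph p).Connected :=
  have : Nonempty V := ⟨root⟩
  ⟨fun u v => (parentGraph_reachable_root hr u).trans (parentGraph_reachable_root hr v).symm⟩

theorem parentGraph_adj_eq_parent_of_rank_le (hroot : p root = root)
    (hr : ∀ v ≠ root, r (p v) < r v) {v w : V} (hvw : (parentGraph p).Adj v w)
    (hw : r w ≤ r v) : w = p v := by
  obtain ⟨hne, h | h⟩ := parentGraph_adj.1 hvw
  · exact h.symm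
  · have hw : w ≠ root := by rintro rfl; exact hne (h.symm.trans hroot)
    have := hr w hw
    rw [h] at this
    omega

/-- On a cycle rotated to start at a vertex `w` of maximal rank, both neighbours of `w` have rank
at most that of `w`, so both are `p w`; but the two neighbours of the base of a cycle differ. -/
theorem parentGraph_isAcyclic (hroot : p root = root) (hr : ∀ v ≠ root, r (p v) < r v) :
    (parentGraph p).IsAcyclic := by
  classical
  intro v c hc
  obtain ⟨w, hw, hmax⟩ := c.support.toFinset.exists_max_image r ⟨v, by simp⟩
  rw [List.mem_toFinset] at hw
  set c' := c.rotate w hw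
  have hc' : c'.IsCycle := hc.rotate hw
  have hmax' : ∀ x ∈ c'.support, r x ≤ r w := by
    intro x hx
    refine hmax x (List.mem_toFinset.2 ?_)
    rcases (Walk.mem_support_append_iff _ _).1 hx with hx | hx
    · exact c.support_dropUntil_subset_support hw hx
    · exact c.support_takeUntil_subset_support hw hx
  have hparent : ∀ i, (parentGraph p).Adj w (c'.getVert i) → c'.getVert i = p w :=
    fun i hadj => parentGraph_adj_eq_parent_of_rank_le hroot hr hadj
      (hmax' _ (c'.getVert_mem_support i))
  exact hc'.snd_ne_penultimate <| (hparent 1 (c'.adj_snd hc'.not_nil)).trans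
    (hparent _ (c'.adj_penultimate hc'.not_nil).symm).symm

theorem parentGraph_isTree (hroot : p root = root) (hr : ∀ v ≠ root, r (p v) < r v) :
    (parentGraph p).IsTree :=
  ⟨parentGraph_connected hr, parentGraph_isAcyclic hroot hr⟩

theorem parentGraph_degree [Fintype V] [DecidableEq V] (hroot : p root = root)
    (hr : ∀ v ≠ root, r (p v) < r v) (v : V) :
    (parentGraph p).degree v = #{w | p w = v ∧ w ≠ v} + if v = root then 0 else 1 := by
  rw [← card_neighborFinset_eq_degree, neighborFinset_eq_filter (G := parentGraph p)]
  simp only [parentGraph_adj]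
  split_ifs with hv
  · subst hv
    congr 1
    ext w
    simp only [mem_filter, mem_univ, true_and, hroot]
    grind
  · have hppv : p (p v) ≠ v := by
      intro h
      have hpv : p v ≠ root := by rintro h'; rw [h', hroot] at h; exact hv h.symm
      have h₁ := hr _ hpv
      have h₂ := hr v hv
      rw [h] at h₁
      omega
    rw [← card_insert_of_notMem (a := p v) (by simp [hppv])]
    congr 1
    ext w
    simp only [mem_filter, mem_univ, true_and, mem_insert]
    grind

end SimpleGraph

open SimpleGraph

variable {k : ℕ}

/-- Spine vertex `j > 0` hangs off `j - 1`, and the `c j` legs `⟨j, _⟩` hang off spine vertex `j`;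
spine vertex `0` is the root. -/
def caterpillarParent (c : Fin k → ℕ) : Fin k ⊕ (Σ j, Fin (c j)) → Fin k ⊕ (Σ j, Fin (c j))
  | .inl j => .inl ⟨j - 1, by omega⟩
  | .inr x => .inl x.1

@[simp]
theorem caterpillarParent_inl (c : Fin k → ℕ) (j : Fin k) :
    caterpillarParent c (.inl j) = .inl ⟨j - 1, by omega⟩ := rfl

@[simp]
theorem caterpillarParent_inr (c : Fin k → ℕ) (x : Σ j, Fin (c j)) :
    caterpillarParent c (.inr x) = .inl x.1 := rfl

abbrev caterpillar (c : Fin k → ℕ) : SimpleGraph (Fin k ⊕ (Σ j, Fin (c j))) :=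
  parentGraph (caterpillarParent c)

section Caterpillar

variable (c : Fin k → ℕ)

theorem caterpillarParent_root (hk : 0 < k) :
    caterpillarParent c (.inl ⟨0, hk⟩) = .inl ⟨0, hk⟩ := rfl

theorem caterpillarParent_rank_lt (hk : 0 < k) :
    ∀ v ≠ .inl ⟨0, hk⟩, Sum.elim (fun j : Fin k => (j : ℕ)) (fun _ => k) (caterpillarParent c v) <
      Sum.elim (fun j : Fin k => (j : ℕ)) (fun _ => k) v := by
  rintro (j | x) hv
  · have : (j : ℕ) ≠ 0 := fun h => hv (by rw [Sum.inl.injEq, Fin.ext_iff, h])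
    simp only [caterpillarParent_inl, Sum.elim_inl]
    omega
  · exact x.1.2

theorem caterpillar_isTree (hk : 0 < k) : (caterpillar c).IsTree :=
  parentGraph_isTree (caterpillarParent_root c hk) (caterpillarParent_rank_lt c hk)

theorem caterpillar_degree_inr (x : Σ j, Fin (c j)) : (caterpillar c).degree (.inr x) = 1 := by
  have hk : 0 < k := x.1.pos
  rw [parentGraph_degree (p := caterpillarParent c) (caterpillarParent_root c hk)
    (caterpillarParent_rank_lt c hk), if_neg (by simp),
    card_eq_zero.2 (filter_eq_empty_iff.2 ?_)]
  rintro (i | y) - <;> simp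

theorem caterpillar_degree_inl (j : Fin k) :
    (caterpillar c).degree (.inl j) =
      c j + (if (j : ℕ) = 0 then 0 else 1) + if (j : ℕ) + 1 < k then 1 else 0 := by
  have hk : 0 < k := j.pos
  have hspine : #{i : Fin k | (i : ℕ) - 1 = j ∧ ¬i = j} = if (j : ℕ) + 1 < k then 1 else 0 := by
    split_ifs with h
    · rw [card_eq_one]
      exact ⟨⟨j + 1, h⟩, by ext i; simp [Fin.ext_iff]; omega⟩
    · rw [card_eq_zero, filter_eq_empty_iff]
      intro i _
      omega
  rw [parentGraph_degree (p := caterpillarParent c) (caterpillarParent_root c hk)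
    (caterpillarParent_rank_lt c hk), card_filter, Fintype.sum_sum_type, Fintype.sum_sigma,
    ← card_filter]
  simp only [caterpillarParent_inl, caterpillarParent_inr, Sum.inl.injEq, Fin.ext_iff, ne_eq,
    reduceCtorEq, not_false_eq_true, and_true, sum_ite_irrel, sum_const, card_univ,
    Fintype.card_fin, smul_eq_mul, mul_one, mul_zero]
  simp only [Fin.val_inj, Fintype.sum_ite_eq', hspine]
  omega

end Caterpillar

def caterpillarLegs (d : Fin k → ℕ) (j : Fin k) : ℕ :=
  d j + 2 - (if (j : ℕ) = 0 then 0 else 1) - if (j : ℕ) + 1 < k then 1 else 0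

section CaterpillarLegs

variable (d : Fin k → ℕ)

@[simp]
theorem caterpillarLegs_degree_inl (j : Fin k) :
    (caterpillar (caterpillarLegs d)).degree (.inl j) = d j + 2 := by
  rw [caterpillar_degree_inl, caterpillarLegs]
  split_ifs <;> omega

theorem caterpillarLegs_degree_of_ne_one (v : Fin k ⊕ Σ j, Fin (caterpillarLegs d j))
    (hv : (caterpillar (caterpillarLegs d)).degree v ≠ 1) :
    ∃ j, (caterpillar (caterpillarLegs d)).degree v = d j + 2 := by
  rcases v with j | x
  · exact ⟨j, caterpillarLegs_degree_inl d j⟩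
  · exact absurd (caterpillar_degree_inr _ x) hv

theorem caterpillarLegs_card_degree_eq (i : ℕ) :
    #{v | (caterpillar (caterpillarLegs d)).degree v = i + 2} = #{j | d j = i} := by
  rw [card_filter, card_filter, Fintype.sum_sum_type]
  simp [caterpillar_degree_inr]

theorem caterpillarLegs_card_degree_eq_one (hk : 0 < k) :
    #{v | (caterpillar (caterpillarLegs d)).degree v = 1} = 2 + ∑ j, d j := by
  have hsum := (caterpillar_isTree (caterpillarLegs d) hk).sum_degree_add_two
  have hleaves : #{v | (caterpillar (caterpillarLegs d)).degree v = 1} =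
      Fintype.card (Σ j, Fin (caterpillarLegs d j)) := by
    rw [card_filter, Fintype.sum_sum_type]
    simp [caterpillar_degree_inr, Fintype.card_sigma]
  rw [Fintype.sum_sum_type, Fintype.card_sum] at hsum
  simp only [caterpillarLegs_degree_inl, caterpillar_degree_inr, sum_add_distrib, sum_const,
    card_univ, smul_eq_mul, mul_one, Fintype.card_fin] at hsum
  omega

end CaterpillarLegs

theorem stmt_2_general (m n : ℕ) (q : ℕ → ℕ)
    (hq : ∃ i ∈ Finset.Icc 1 (m - 1), 0 < q i)
    (hsum : 2 + ∑ i ∈ Finset.Icc 1 (m - 1), i * q i = n) :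
    ∃ (V : Type) (_ : Fintype V) (_ : DecidableEq V) (G : SimpleGraph V)
      (_ : DecidableRel G.Adj),
      G.IsTree ∧
      (Finset.univ.filter (fun v => G.degree v = 1)).card = n ∧
      (∀ v : V, G.degree v ≠ 1 → 3 ≤ G.degree v ∧ G.degree v ≤ m + 1) ∧
      (∀ i ∈ Finset.Icc 1 (m - 1),
        (Finset.univ.filter (fun v => G.degree v = i + 2)).card = q i) := by
  obtain ⟨k, d, hds, hfiber⟩ := (Icc 1 (m - 1)).exists_fin_card_fiber_eq q
  obtain ⟨i₀, hi₀, hqi₀⟩ := hq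
  obtain ⟨j₀, -⟩ := card_pos.1 ((hfiber i₀ hi₀).symm ▸ hqi₀)
  have hdsum : ∑ j, d j = ∑ i ∈ Icc 1 (m - 1), i * q i :=
    calc ∑ j, d j = ∑ i ∈ Icc 1 (m - 1), ∑ j with d j = i, i :=
          (sum_fiberwise_of_maps_to' (fun j _ => hds j) fun i => i).symm
      _ = _ := sum_congr rfl fun i hi => by rw [sum_const, hfiber i hi, smul_eq_mul, mul_comm]
  refine ⟨_, inferInstance, inferInstance, caterpillar (caterpillarLegs d), inferInstance,
    caterpillar_isTree _ j₀.pos, ?_, fun v hv => ?_, fun i hi => ?_⟩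
  · rw [caterpillarLegs_card_degree_eq_one d j₀.pos, hdsum, hsum]
  · obtain ⟨j, hj⟩ := caterpillarLegs_degree_of_ne_one d v hv
    have := mem_Icc.1 (hds j)
    omega
  · rw [caterpillarLegs_card_degree_eq, hfiber i hi]

/-- For any vector `(q_1, …, q_{m−1})` of non-negative integers with at least one
`q_i > 0`, if `2 + Σ_{i=1}^{m−1} i·q_i = n`, then there exists a tree with exactly `n` leaves
whose internal nodes have degrees between 3 and `m+1`, such that for each `i` the number of
internal nodes of degree `i+2` is exactly `q_i`. -/
theorem stmt_2 (m n : ℕ) (hm : 2 ≤ m) (q : ℕ → ℕ)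
    (hq : ∃ i ∈ Finset.Icc 1 (m - 1), 0 < q i)
    (hsum : 2 + ∑ i ∈ Finset.Icc 1 (m - 1), i * q i = n) :
    ∃ (V : Type) (_ : Fintype V) (_ : DecidableEq V) (G : SimpleGraph V)
      (_ : DecidableRel G.Adj),
      G.IsTree ∧
      (Finset.univ.filter (fun v => G.degree v = 1)).card = n ∧
      (∀ v : V, G.degree v ≠ 1 → 3 ≤ G.degree v ∧ G.degree v ≤ m + 1) ∧
      (∀ i ∈ Finset.Icc 1 (m - 1),
        (Finset.univ.filter (fun v => G.degree v = i + 2)).card = q i) :=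
  stmt_2_general m n q hq hsum
end

section
/- Let T be a finite tree with latency factors l_d ≥ 0 as above (l_0 = l_1 = 0) and define φ(T) as the maximum over simple paths (v_0, …, v_k) in T of Σ_{i=0}^{k} l_{deg(v_i,T)−1}. If an ordered edge (a,b) satisfies w(a,b) − l_{deg(a,T)−1} ≤ w(b,a) and w(a,b) > w(b,a), then φ(T) = w(a,b) + w(b,a), where w is the directed subtree latency defined recursively by w(a,b) = l_{deg(a,T)−1} + max over neighbors c ≠ b of a of w(c,a), with w(a,b) = 0 when a is a leaf. -/
/-!
Removing the edge `ab` splits the tree into the sides of `a` and of `b`, and `w c d` is the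
largest latency of a path that ends at `c` and stays on `c`'s side of the edge `cd`: following the
neighbour attaining the supremum builds such a path, and induction along a path bounds every
other one. Joining the two optimal paths through `ab` gives a path of latency `w a b + w b a`, and
a path using the edge `ab` splits there into two paths that are no heavier. Any other path lies on
one side, say that of `c`, with `d` the other endpoint of the edge; cut at its vertex `t` nearest
to `c`, its two halves continued from `t` to `c` are paths on `c`'s side, so its latency is at
most `2 w c d - l (deg c - 1)`, which the two hypotheses bound by `w a b + w b a`.
-/

namespace SimpleGraph

variable {V : Type*} {G : SimpleGraph V}

namespace Walk

def latency (f : V → ℝ) {u v : V} (p : G.Walk u v) : ℝ :=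
  (p.support.map f).sum

variable (f : V → ℝ)

@[simp]
lemma latency_nil {u : V} : (nil : G.Walk u u).latency f = f u := by
  simp [latency]

@[simp]
lemma latency_cons {u v w : V} (h : G.Adj u v) (p : G.Walk v w) :
    (cons h p).latency f = f u + p.latency f := by
  simp [latency]

lemma latency_concat {u v w : V} (p : G.Walk u v) (h : G.Adj v w) :
    (p.concat h).latency f = p.latency f + f w := by
  simp [latency, support_concat]

lemma latency_append {u v w : V} (p : G.Walk u v) (q : G.Walk v w) :
    (p.append q).latency f + f v = p.latency f + q.latency f := by
  simp only [latency, support_append, List.map_append, List.sum_append]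
  rw [← cons_tail_support q, List.map_cons, List.sum_cons, List.tail_cons]
  ring

@[simp]
lemma latency_reverse {u v : V} (p : G.Walk u v) : p.reverse.latency f = p.latency f := by
  simp [latency, support_reverse]

variable {f}

lemma le_latency_of_mem_support (hf : ∀ v, 0 ≤ f v) {u v z : V} {p : G.Walk u v}
    (hz : z ∈ p.support) : f z ≤ p.latency f :=
  List.single_le_sum (by simpa using fun v _ => hf v) _ (List.mem_map_of_mem hz)

lemma IsPath.append {u v w : V} {p : G.Walk u v} {q : G.Walk v w} (hp : p.IsPath)
    (hq : q.IsPath) (hpq : ∀ x ∈ p.support, x ∈ q.support → x = v) :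
    (p.append q).IsPath := by
  rw [isPath_def, support_append, List.nodup_append]
  refine ⟨hp.support_nodup, hq.support_nodup.sublist (List.tail_sublist _), ?_⟩
  intro x hxp y hyq rfl
  have hvq := hq.support_nodup
  rw [← cons_tail_support q, List.nodup_cons] at hvq
  exact hvq.1 (hpq x hxp (List.mem_of_mem_tail hyq) ▸ hyq)

end Walk

open Walk

lemma IsAcyclic.mem_edges_of_adj (hG : G.IsAcyclic) {a b : V} (hab : G.Adj a b)
    (p : G.Walk a b) : s(a, b) ∈ p.edges :=
  isBridge_iff_forall_walk_mem_edges.mp (isAcyclic_iff_forall_adj_isBridge.mp hG hab) p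

lemma IsAcyclic.notMem_support_of_adj (hG : G.IsAcyclic) {c d e u : V} (hec : G.Adj e c)
    (hcd : G.Adj c d) (hed : e ≠ d) {q : G.Walk u e} (hc : c ∉ q.support) :
    d ∉ q.support := by
  classical
  intro hd
  have h := hG.mem_edges_of_adj hcd.symm ((q.dropUntil d hd).concat hec)
  rw [edges_concat, List.concat_eq_append, List.mem_append, List.mem_singleton,
    Sym2.congr_left] at h
  rcases h with h | rfl
  · exact hc (q.snd_mem_support_of_mem_edges (q.edges_dropUntil_subset_edges hd h))
  · exact hed rfl

lemma IsAcyclic.notMem_support_of_isPath (hG : G.IsAcyclic) {a b u v : V} (hab : G.Adj a b)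
    {p : G.Walk u a} {q : G.Walk v b} (hp : p.IsPath) (hq : q.IsPath) (hbp : b ∉ p.support)
    (haq : a ∉ q.support) {x : V} (hxp : x ∈ p.support) : x ∉ q.support := by
  classical
  exact fun hxq => hbp <| p.support_dropUntil_subset_support hxp <|
    hG.mem_support_of_ne_mem_support_of_adj_of_isPath (hp.dropUntil hxp) (hq.dropUntil hxq) hab
      fun h => haq (q.support_dropUntil_subset_support hxq h)

lemma Connected.exists_isPath_meeting (hG : G.Connected) {u v : V} (p : G.Walk u v) (c : V) :
    ∃ (t : V) (q : G.Walk c t), q.IsPath ∧ t ∈ p.support ∧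
      ∀ z ∈ q.support, z ∈ p.support → z = t := by
  classical
  obtain ⟨t, ht, hmin⟩ := p.support.toFinset.exists_min_image (G.dist c) ⟨u, by simp⟩
  obtain ⟨q, hq, hlen⟩ := hG.exists_path_of_dist c t
  refine ⟨t, q, hq, List.mem_toFinset.mp ht, fun z hz hzp => ?_⟩
  by_contra hzt
  have := q.length_takeUntil_lt_length hz hzt
  have := G.dist_le (q.takeUntil z hz)
  have := hmin z (List.mem_toFinset.mpr hzp)
  omega

lemma finite_setOf_adj_ne [Finite V] (w : V → V → ℝ) (c d : V) :
    {x : ℝ | ∃ e, G.Adj e c ∧ e ≠ d ∧ x = w e c}.Finite :=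
  (Set.finite_range fun e => w e c).subset fun _ ⟨e, _, _, hx⟩ => ⟨e, hx.symm⟩

variable [Fintype V] [DecidableRel G.Adj]

lemma degree_ne_one_of_adj {c d e : V} (hec : G.Adj e c) (hcd : G.Adj c d) (hed : e ≠ d) :
    G.degree c ≠ 1 := by
  refine ne_of_gt (Finset.one_lt_card.mpr ⟨e, ?_, d, ?_, hed⟩) <;> simp [hec.symm, hcd]

lemma exists_adj_ne_of_degree_ne_one {c d : V} (hcd : G.Adj c d) (hc : G.degree c ≠ 1) :
    ∃ e, G.Adj e c ∧ e ≠ d := by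
  have hd : d ∈ G.neighborFinset c := by simpa using hcd
  obtain ⟨e, he, hed⟩ := Finset.exists_mem_ne
    (lt_of_le_of_ne (Finset.card_pos.mpr ⟨d, hd⟩) (Ne.symm hc)) d
  exact ⟨e, (G.mem_neighborFinset c e).mp he |>.symm, hed⟩

/-- The recursion defining the directed subtree latency `w`, with `f v` in place of
`l (deg v - 1)`. -/
structure IsSubtreeLatency (G : SimpleGraph V) [DecidableRel G.Adj] (f : V → ℝ)
    (w : V → V → ℝ) : Prop where
  leaf : ∀ a b : V, G.Adj a b → G.degree a = 1 → w a b = 0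
  node : ∀ a b : V, G.Adj a b → G.degree a ≠ 1 →
    w a b = f a + sSup {x : ℝ | ∃ c : V, G.Adj c a ∧ c ≠ b ∧ x = w c a}

namespace IsSubtreeLatency

variable {f : V → ℝ} {w : V → V → ℝ} (hw : IsSubtreeLatency G f w)
include hw

lemma add_le {c d e : V} (hcd : G.Adj c d) (hec : G.Adj e c) (hed : e ≠ d) :
    f c + w e c ≤ w c d := by
  have hfin := finite_setOf_adj_ne (G := G) w c d
  rw [hw.node c d hcd (degree_ne_one_of_adj hec hcd hed)]
  gcongr
  exact le_csSup hfin.bddAbove ⟨e, hec, hed, rfl⟩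

lemma exists_eq_add {c d : V} (hcd : G.Adj c d) (hc : G.degree c ≠ 1) :
    ∃ e, G.Adj e c ∧ e ≠ d ∧ w c d = f c + w e c := by
  obtain ⟨e₀, he₀c, he₀d⟩ := exists_adj_ne_of_degree_ne_one hcd hc
  obtain ⟨e, hec, hed, hsup⟩ :=
    (show {x : ℝ | ∃ e, G.Adj e c ∧ e ≠ d ∧ x = w e c}.Nonempty from
      ⟨_, e₀, he₀c, he₀d, rfl⟩).csSup_mem (finite_setOf_adj_ne w c d)
  exact ⟨e, hec, hed, by rw [hw.node c d hcd hc, hsup]⟩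

variable (hG : G.IsAcyclic) (hleaf : ∀ v, G.degree v = 1 → f v = 0)
include hG hleaf

lemma exists_isPath_latency_eq {c d : V} (hcd : G.Adj c d) :
    ∃ (u : V) (p : G.Walk u c), p.IsPath ∧ d ∉ p.support ∧ p.latency f = w c d := by
  -- The recursion for `w` moves away from `d`; induct on a bound for the paths it can follow.
  suffices ∀ n (c d : V), G.Adj c d →
      (∀ (u : V) (q : G.Walk u c), q.IsPath → d ∉ q.support → q.length < n) →
      ∃ (u : V) (p : G.Walk u c), p.IsPath ∧ d ∉ p.support ∧ p.latency f = w c d from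
    this _ c d hcd fun _ _ hq _ => hq.length_lt
  intro n
  induction n with
  | zero => exact fun c d hcd h => absurd (h c nil .nil (by simp [hcd.ne'])) (Nat.not_lt_zero _)
  | succ n ih =>
    intro c d hcd hlen
    by_cases hc : G.degree c = 1
    · exact ⟨c, nil, .nil, by simp [hcd.ne'], by simp [hleaf c hc, hw.leaf c d hcd hc]⟩
    obtain ⟨e, hec, hed, hwe⟩ := hw.exists_eq_add hcd hc
    have hd : ∀ {u} {q : G.Walk u e}, c ∉ q.support → d ∉ q.support :=
      hG.notMem_support_of_adj hec hcd hed
    have hdc : d ≠ c := hcd.ne'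
    obtain ⟨u, p, hp, hcp, hlat⟩ := ih e c hec fun u q hq hcq => by
      have := hlen u (q.concat hec) (hq.concat hcq hec) (by simp [support_concat, hd hcq, hdc])
      simpa using this
    refine ⟨u, p.concat hec, hp.concat hcp hec, by simp [support_concat, hd hcp, hdc], ?_⟩
    rw [latency_concat, hlat, hwe, add_comm]

lemma exists_isPath_latency_eq_add {a b : V} (hab : G.Adj a b) :
    ∃ (u v : V) (p : G.Walk u v), p.IsPath ∧ p.latency f = w a b + w b a := by
  obtain ⟨u, p, hp, hbp, hlp⟩ := hw.exists_isPath_latency_eq hG hleaf hab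
  obtain ⟨v, q, hq, haq, hlq⟩ := hw.exists_isPath_latency_eq hG hleaf hab.symm
  have hpq : (cons hab q.reverse).IsPath := (cons_isPath_iff _ _).mpr ⟨hq.reverse, by simpa⟩
  refine ⟨u, v, p.append (cons hab q.reverse), hp.append hpq fun x hxp hx => ?_, ?_⟩
  · rw [support_cons, List.mem_cons, support_reverse, List.mem_reverse] at hx
    exact hx.resolve_right (hG.notMem_support_of_isPath hab hp hq hbp haq hxp)
  · have := latency_append f p (cons hab q.reverse)
    rw [latency_cons, latency_reverse] at this
    linarith

variable (hf : ∀ v, 0 ≤ f v)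
include hf

lemma f_le {c d : V} (hcd : G.Adj c d) : f c ≤ w c d := by
  obtain ⟨_, p, -, -, hlat⟩ := hw.exists_isPath_latency_eq hG hleaf hcd
  exact hlat ▸ le_latency_of_mem_support hf p.end_mem_support

lemma latency_le_of_isPath_start {c u : V} {q : G.Walk c u} (hq : q.IsPath) {d : V}
    (hcd : G.Adj c d) (hdq : d ∉ q.support) : q.latency f ≤ w c d := by
  induction q generalizing d with
  | nil => simpa using hw.f_le hG hleaf hf hcd
  | @cons c e u hce q ih =>
    rw [cons_isPath_iff] at hq
    have hed : e ≠ d := fun h => hdq (h ▸ by simp)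
    have := ih hq.1 hce.symm hq.2
    have := hw.add_le hcd hce.symm hed
    rw [latency_cons]
    linarith

lemma latency_le_of_isPath {u c : V} {p : G.Walk u c} (hp : p.IsPath) {d : V}
    (hcd : G.Adj c d) (hdp : d ∉ p.support) : p.latency f ≤ w c d := by
  simpa using hw.latency_le_of_isPath_start hG hleaf hf hp.reverse hcd (by simpa using hdp)

lemma latency_le_two_mul_sub {c d u v t : V} (hcd : G.Adj c d) {p : G.Walk u v}
    (hp : p.IsPath) (hdp : d ∉ p.support) {q : G.Walk c t} (hq : q.IsPath)
    (hdq : d ∉ q.support) (htp : t ∈ p.support)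
    (hmeet : ∀ z ∈ q.support, z ∈ p.support → z = t) :
    p.latency f ≤ 2 * w c d - f c := by
  -- Both halves of `p`, continued from `t` along `q` back to `c`, are paths avoiding `d`.
  obtain ⟨p₁, p₂, hp₁, hp₂, rfl⟩ := hp.mem_support_iff_exists_append.mp htp
  simp only [mem_support_append_iff, not_or] at hdp hmeet
  have h₁ := hw.latency_le_of_isPath hG hleaf hf
    (hp₁.append hq.reverse fun z hz hz' => hmeet z (by simpa using hz') (.inl hz)) hcd
    (by simp [hdp.1, hdq])
  have h₂ := hw.latency_le_of_isPath hG hleaf hf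
    (hp₂.reverse.append hq.reverse fun z hz hz' => hmeet z (by simpa using hz')
      (.inr (by simpa using hz))) hcd (by simp [hdp.2, hdq])
  have e := latency_append f p₁ p₂
  have e₁ := latency_append f p₁ q.reverse
  have e₂ := latency_append f p₂.reverse q.reverse
  simp only [latency_reverse] at e₁ e₂
  have := le_latency_of_mem_support hf q.start_mem_support
  have := le_latency_of_mem_support hf q.end_mem_support
  linarith

lemma latency_le_of_notMem_support (hconn : G.Connected) {a b u v : V} (hab : G.Adj a b)
    {p : G.Walk u v} (hp : p.IsPath) (hbp : b ∉ p.support) :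
    p.latency f ≤ 2 * w a b - f a ∨ p.latency f ≤ 2 * w b a - f b := by
  obtain ⟨t, q, hq, htp, hmeet⟩ := hconn.exists_isPath_meeting p a
  by_cases hbq : b ∈ q.support
  · -- `q` crosses the edge `ab`, so `p` lies on the side of `b`.
    obtain ⟨q₁, q₂, -, hq₂, rfl⟩ := hq.mem_support_iff_exists_append.mp hbq
    have haq₂ : a ∉ q₂.support := fun h =>
      hq.ne_of_mem_support_of_append hab.ne q₁.start_mem_support h rfl
    have hap : a ∉ p.support := fun h =>
      haq₂ (hmeet a (by simp) h ▸ q₂.end_mem_support)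
    exact .inr (hw.latency_le_two_mul_sub hG hleaf hf hab.symm hp hap hq₂ haq₂ htp
      fun z hz => hmeet z (by simp [hz]))
  · exact .inl (hw.latency_le_two_mul_sub hG hleaf hf hab hp hbp hq hbq htp hmeet)

lemma latency_le_of_mem_support {a b u v : V} (hab : G.Adj a b) {q : G.Walk u a}
    {r : G.Walk a v} (hp : (q.append r).IsPath) (hbr : b ∈ r.support) :
    (q.append r).latency f ≤ w a b + w b a := by
  obtain ⟨r₁, r₂, hr₁, hr₂, rfl⟩ :=
    hp.of_append_right.mem_support_iff_exists_append.mp hbr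
  obtain rfl : r₁ = hab.toWalk :=
    congrArg Subtype.val ((hG.subsingleton_path a b).elim ⟨r₁, hr₁⟩ (Path.singleton hab))
  have hbq : b ∉ q.support := fun h => hp.ne_of_mem_support_of_append hab.ne' h hbr rfl
  have har₂ : a ∉ r₂.support := fun h =>
    hp.of_append_right.ne_of_mem_support_of_append hab.ne (by simp) h rfl
  have := hw.latency_le_of_isPath hG hleaf hf hp.of_append_left hab hbq
  have := hw.latency_le_of_isPath_start hG hleaf hf hr₂ hab.symm har₂
  have e₁ := latency_append f q (hab.toWalk.append r₂)
  have e₂ := latency_append f hab.toWalk r₂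
  simp only [Adj.toWalk, latency_cons, latency_nil] at e₂
  linarith

theorem isGreatest_latency (hconn : G.Connected) {a b : V} (hab : G.Adj a b)
    (h₁ : w a b - f a ≤ w b a) (h₂ : w b a < w a b) :
    IsGreatest {x | ∃ (u v : V) (p : G.Walk u v), p.IsPath ∧ x = p.latency f}
      (w a b + w b a) := by
  refine ⟨?_, ?_⟩
  · obtain ⟨u, v, p, hp, hlat⟩ := hw.exists_isPath_latency_eq_add hG hleaf hab
    exact ⟨u, v, p, hp, hlat.symm⟩
  rintro _ ⟨u, v, p, hp, rfl⟩
  have hfb := hf b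
  by_cases hbp : b ∈ p.support
  · by_cases hap : a ∈ p.support
    · obtain ⟨q, r, -, -, rfl⟩ := hp.mem_support_iff_exists_append.mp hap
      rcases (mem_support_append_iff q r).mp hbp with hbq | hbr
      · have := hw.latency_le_of_mem_support hG hleaf hf hab (q := r.reverse) (r := q.reverse)
          (by rwa [← reverse_append, isPath_reverse_iff]) (by simpa using hbq)
        rwa [← reverse_append, latency_reverse] at this
      · exact hw.latency_le_of_mem_support hG hleaf hf hab hp hbr
    · rcases hw.latency_le_of_notMem_support hG hleaf hf hconn hab.symm hp hap with h | h <;>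
        linarith
  · rcases hw.latency_le_of_notMem_support hG hleaf hf hconn hab hp hbp with h | h <;> linarith

end IsSubtreeLatency

end SimpleGraph

theorem stmt_17_general {V : Type} [Fintype V]
    (G : SimpleGraph V) [DecidableRel G.Adj] (hT : G.IsTree)
    (l : ℕ → ℝ) (hl0 : l 0 = 0) (hlnn : ∀ d, 0 ≤ l d)
    (w : V → V → ℝ)
    (hwleaf : ∀ a b : V, G.Adj a b → G.degree a = 1 → w a b = 0)
    (hwnode : ∀ a b : V, G.Adj a b → G.degree a ≠ 1 →
      w a b = l (G.degree a - 1) +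
        sSup {x : ℝ | ∃ c : V, G.Adj c a ∧ c ≠ b ∧ x = w c a})
    (a b : V) (hab : G.Adj a b)
    (h1 : w a b - l (G.degree a - 1) ≤ w b a)
    (h2 : w b a < w a b) :
    sSup {x : ℝ | ∃ (u v : V) (p : G.Walk u v), p.IsPath ∧
        x = (p.support.map (fun z => l (G.degree z - 1))).sum}
      = w a b + w b a :=
  (SimpleGraph.IsSubtreeLatency.isGreatest_latency (f := fun z => l (G.degree z - 1))
    ⟨hwleaf, hwnode⟩ hT.isAcyclic (fun v hv => by simp [hv, hl0]) (fun _ => hlnn _)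
    hT.connected hab h1 h2).csSup_eq

/-- Let `T` be a finite tree with latency factors `l d ≥ 0` (`l 0 = l 1 = 0`),
and define `φ(T)` as the maximum over simple paths `(v_0, …, v_k)` in `T` of
`Σ_{i=0}^{k} l (deg v_i − 1)`.  Let `w : V → V → ℝ` be the directed subtree latency:
`w a b = 0` when `a` is a leaf, and otherwise
`w a b = l (deg a − 1) + max over neighbors c ≠ b of a of (w c a)`.
If an ordered edge `(a,b)` satisfies `w a b − l (deg a − 1) ≤ w b a` and `w a b > w b a`,
then `φ(T) = w a b + w b a`. -/
theorem stmt_17 {V : Type} [Fintype V] [DecidableEq V]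
    (G : SimpleGraph V) [DecidableRel G.Adj] (hT : G.IsTree)
    (l : ℕ → ℝ) (hl0 : l 0 = 0) (hl1 : l 1 = 0) (hlnn : ∀ d, 0 ≤ l d)
    (w : V → V → ℝ)
    (hwleaf : ∀ a b : V, G.Adj a b → G.degree a = 1 → w a b = 0)
    (hwnode : ∀ a b : V, G.Adj a b → G.degree a ≠ 1 →
      w a b = l (G.degree a - 1) +
        sSup {x : ℝ | ∃ c : V, G.Adj c a ∧ c ≠ b ∧ x = w c a})
    (a b : V) (hab : G.Adj a b)
    (h1 : w a b - l (G.degree a - 1) ≤ w b a)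
    (h2 : w b a < w a b) :
    sSup {x : ℝ | ∃ (u v : V) (p : G.Walk u v), p.IsPath ∧
        x = (p.support.map (fun z => l (G.degree z - 1))).sum}
      = w a b + w b a :=
  stmt_17_general G hT l hl0 hlnn w hwleaf hwnode a b hab h1 h2
end
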